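/- arXiv:math/0507036 — 3 statements merged into one kernel-verified Lean document; each statement's English description precedes it below -/
import Mathlib

section
/- Let M and N be R-modules that are free as Z_p-modules. Then the canonical map M ⊗_{Z_p} N → M ⊠ N sending m ⊗ n to m ∘ n is injective. -/
set_option synthInstance.maxHeartbeats 1000000
set_option maxHeartbeats 1000000

/-! Statement 10: if `M`, `N` are Dieudonné modules, free as `ℤ_p`-modules, then the
canonical map `M ⊗_{ℤ_p} N → M ⊠ N`, `m ⊗ n ↦ m ∘ n`, is injective. -/

noncomputable section

/-- A Dieudonné-bilinear map between `ℤ_p`-modules equipped with operators `F`, `V`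
(diagonal `V`, and `F` hooked across `V`), as in the definition of the bilinear
product of Dieudonné modules. -/
def IsDBilinear {p : ℕ} [Fact p.Prime] {M N P : Type}
    [AddCommGroup M] [Module ℤ_[p] M] [AddCommGroup N] [Module ℤ_[p] N]
    [AddCommGroup P] [Module ℤ_[p] P]
    (FM VM : Module.End ℤ_[p] M) (FN VN : Module.End ℤ_[p] N)
    (FP VP : Module.End ℤ_[p] P) (β : M →ₗ[ℤ_[p]] N →ₗ[ℤ_[p]] P) : Prop :=
  (∀ m n, FP (β (VM m) n) = β m (FN n)) ∧
  (∀ m n, FP (β m (VN n)) = β (FM m) n) ∧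
  (∀ m n, VP (β m n) = β (VM m) (VN n))

/-- `(P, β)` realizes the bilinear product `M ⊠ N` of Dieudonné modules: `β` is a
Dieudonné-bilinear map, `P` is itself a Dieudonné module, and `β` is universal among
Dieudonné-bilinear maps out of `M × N`: every such map to a Dieudonné module `Q`
factors uniquely through an `R`-module map (a `ℤ_p`-linear map commuting with `F`
and `V`) out of `P`.  This is exactly the defining universal property of `M ⊠ N`,
which the explicit construction `R ⊗_{ℤ_p[V]} (M ⊗ N)/∼` satisfies. -/
def IsBoxtimes (p : ℕ) [Fact p.Prime] {M N P : Type}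
    [AddCommGroup M] [Module ℤ_[p] M] [AddCommGroup N] [Module ℤ_[p] N]
    [AddCommGroup P] [Module ℤ_[p] P]
    (FM VM : Module.End ℤ_[p] M) (FN VN : Module.End ℤ_[p] N)
    (FP VP : Module.End ℤ_[p] P) (β : M →ₗ[ℤ_[p]] N →ₗ[ℤ_[p]] P) : Prop :=
  IsDBilinear FM VM FN VN FP VP β ∧
  FP * VP = (p : ℤ_[p]) • (1 : Module.End ℤ_[p] P) ∧
  VP * FP = (p : ℤ_[p]) • (1 : Module.End ℤ_[p] P) ∧
  ∀ (Q : Type) [AddCommGroup Q] [Module ℤ_[p] Q],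
    ∀ FQ VQ : Module.End ℤ_[p] Q,
    FQ * VQ = (p : ℤ_[p]) • (1 : Module.End ℤ_[p] Q) →
    VQ * FQ = (p : ℤ_[p]) • (1 : Module.End ℤ_[p] Q) →
    ∀ γ : M →ₗ[ℤ_[p]] N →ₗ[ℤ_[p]] Q, IsDBilinear FM VM FN VN FQ VQ γ →
    ∃! φ : P →ₗ[ℤ_[p]] Q,
      φ ∘ₗ (FP : P →ₗ[ℤ_[p]] P) = (FQ : Q →ₗ[ℤ_[p]] Q) ∘ₗ φ ∧
      φ ∘ₗ (VP : P →ₗ[ℤ_[p]] P) = (VQ : Q →ₗ[ℤ_[p]] Q) ∘ₗ φ ∧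
      ∀ m n, φ (β m n) = γ m n

open TensorProduct

theorem statement10 (p : ℕ) [Fact p.Prime] (hp : Odd p)
    {M N P : Type}
    [AddCommGroup M] [Module ℤ_[p] M] [Module.Free ℤ_[p] M]
    [AddCommGroup N] [Module ℤ_[p] N] [Module.Free ℤ_[p] N]
    [AddCommGroup P] [Module ℤ_[p] P]
    (FM VM : Module.End ℤ_[p] M) (FN VN : Module.End ℤ_[p] N)
    (hM : FM * VM = (p : ℤ_[p]) • (1 : Module.End ℤ_[p] M))
    (hM' : VM * FM = (p : ℤ_[p]) • (1 : Module.End ℤ_[p] M))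
    (hN : FN * VN = (p : ℤ_[p]) • (1 : Module.End ℤ_[p] N))
    (hN' : VN * FN = (p : ℤ_[p]) • (1 : Module.End ℤ_[p] N))
    (FP VP : Module.End ℤ_[p] P) (β : M →ₗ[ℤ_[p]] N →ₗ[ℤ_[p]] P)
    (hbox : IsBoxtimes p FM VM FN VN FP VP β) :
    Function.Injective (⇑(TensorProduct.lift β)) := by
  obtain ⟨hbil, hFV, hVF, huniv⟩ := hbox
  -- pointwise versions of the `F*V = p` hypotheses
  have hMfv : ∀ m, FM (VM m) = (p : ℤ_[p]) • m := fun m =>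
    congrArg (· m) (congrArg DFunLike.coe hM)
  have hMvf : ∀ m, VM (FM m) = (p : ℤ_[p]) • m := fun m =>
    congrArg (· m) (congrArg DFunLike.coe hM')
  have hNfv : ∀ n, FN (VN n) = (p : ℤ_[p]) • n := fun n =>
    congrArg (· n) (congrArg DFunLike.coe hN)
  have hNvf : ∀ n, VN (FN n) = (p : ℤ_[p]) • n := fun n =>
    congrArg (· n) (congrArg DFunLike.coe hN')
  -- the big module Q and the inclusion
  have hp0 : (p : ℚ_[p]) ≠ 0 := by
    exact_mod_cast (Fact.out : p.Prime).ne_zero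
  have hcancel : ∀ q : ℚ_[p] ⊗[ℤ_[p]] (M ⊗[ℤ_[p]] N), (p : ℚ_[p])⁻¹ • ((p : ℤ_[p]) • q) = q := by
    intro q
    rw [← algebraMap_smul ℚ_[p] (p : ℤ_[p]) q]
    rw [map_natCast (algebraMap ℤ_[p] ℚ_[p])]
    rw [inv_smul_smul₀ hp0]
  let ι : (M ⊗[ℤ_[p]] N) →ₗ[ℤ_[p]] (ℚ_[p] ⊗[ℤ_[p]] (M ⊗[ℤ_[p]] N)) := TensorProduct.mk ℤ_[p] ℚ_[p] (M ⊗[ℤ_[p]] N) 1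
  have hι : Function.Injective ι := by
    have h1 : Function.Injective (Algebra.linearMap ℤ_[p] ℚ_[p]) := by
      intro a b h; exact Subtype.ext h
    have h2 := Module.Flat.rTensor_preserves_injective_linearMap
      (M := (M ⊗[ℤ_[p]] N)) (Algebra.linearMap ℤ_[p] ℚ_[p]) h1
    have h3 : ∀ x : (M ⊗[ℤ_[p]] N), ι x =
        LinearMap.rTensor (M ⊗[ℤ_[p]] N) (Algebra.linearMap ℤ_[p] ℚ_[p])
          ((TensorProduct.lid ℤ_[p] (M ⊗[ℤ_[p]] N)).symm x) := by
      intro x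
      induction x using TensorProduct.induction_on with
      | zero => simp
      | tmul m n =>
        simp only [LinearMap.rTensor_tmul, TensorProduct.lid_symm_apply,
          Algebra.linearMap_apply, map_one]
        rfl
      | add a b ha hb => simp [map_add, ha, hb]
    intro a b h
    rw [h3 a, h3 b] at h
    exact (TensorProduct.lid ℤ_[p] (M ⊗[ℤ_[p]] N)).symm.injective (h2 h)
  -- F and V on Q
  let VQ : Module.End ℤ_[p] (ℚ_[p] ⊗[ℤ_[p]] (M ⊗[ℤ_[p]] N)) := LinearMap.lTensor ℚ_[p] (TensorProduct.map VM VN)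
  let FQ : Module.End ℤ_[p] (ℚ_[p] ⊗[ℤ_[p]] (M ⊗[ℤ_[p]] N)) :=
    (p : ℚ_[p])⁻¹ • LinearMap.lTensor ℚ_[p] (TensorProduct.map FM FN)
  have hFQ : ∀ (c : ℚ_[p]) (m : M) (n : N),
      FQ (c ⊗ₜ[ℤ_[p]] (m ⊗ₜ[ℤ_[p]] n)) = ((p : ℚ_[p])⁻¹ • c) ⊗ₜ[ℤ_[p]] (FM m ⊗ₜ[ℤ_[p]] FN n) := by
    intro c m n
    simp only [FQ, LinearMap.smul_apply, LinearMap.lTensor_tmul, TensorProduct.map_tmul]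
    rw [TensorProduct.smul_tmul']
  have hVQ : ∀ (c : ℚ_[p]) (m : M) (n : N),
      VQ (c ⊗ₜ[ℤ_[p]] (m ⊗ₜ[ℤ_[p]] n)) = c ⊗ₜ[ℤ_[p]] (VM m ⊗ₜ[ℤ_[p]] VN n) := by
    intro c m n
    simp only [VQ, LinearMap.lTensor_tmul, TensorProduct.map_tmul]
  have hQFV : FQ * VQ = (p : ℤ_[p]) • (1 : Module.End ℤ_[p] (ℚ_[p] ⊗[ℤ_[p]] (M ⊗[ℤ_[p]] N))) := by
    apply LinearMap.ext; intro q
    induction q using TensorProduct.induction_on with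
    | zero => simp
    | tmul c x =>
      induction x using TensorProduct.induction_on with
      | zero => simp
      | tmul m n =>
        simp only [Module.End.mul_apply, LinearMap.smul_apply, Module.End.one_apply]
        rw [hVQ, hFQ, hMfv, hNfv, TensorProduct.smul_tmul_smul,
          ← TensorProduct.smul_tmul', TensorProduct.tmul_smul, mul_smul, hcancel]
      | add a b ha hb =>
        simp only [Module.End.mul_apply, LinearMap.smul_apply, Module.End.one_apply,
          TensorProduct.tmul_add, map_add, smul_add] at ha hb ⊢
        rw [ha, hb]
    | add a b ha hb =>
      simp only [Module.End.mul_apply, LinearMap.smul_apply, Module.End.one_apply,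
        map_add, smul_add] at ha hb ⊢
      rw [ha, hb]
  have hQVF : VQ * FQ = (p : ℤ_[p]) • (1 : Module.End ℤ_[p] (ℚ_[p] ⊗[ℤ_[p]] (M ⊗[ℤ_[p]] N))) := by
    apply LinearMap.ext; intro q
    induction q using TensorProduct.induction_on with
    | zero => simp
    | tmul c x =>
      induction x using TensorProduct.induction_on with
      | zero => simp
      | tmul m n =>
        simp only [Module.End.mul_apply, LinearMap.smul_apply, Module.End.one_apply]
        rw [hFQ, hVQ, hMvf, hNvf, TensorProduct.smul_tmul_smul,
          ← TensorProduct.smul_tmul', TensorProduct.tmul_smul, mul_smul, hcancel]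
      | add a b ha hb =>
        simp only [Module.End.mul_apply, LinearMap.smul_apply, Module.End.one_apply,
          TensorProduct.tmul_add, map_add, smul_add] at ha hb ⊢
        rw [ha, hb]
    | add a b ha hb =>
      simp only [Module.End.mul_apply, LinearMap.smul_apply, Module.End.one_apply,
        map_add, smul_add] at ha hb ⊢
      rw [ha, hb]
  -- the bilinear map γ m n = 1 ⊗ (m ⊗ n)
  let γ : M →ₗ[ℤ_[p]] N →ₗ[ℤ_[p]] (ℚ_[p] ⊗[ℤ_[p]] (M ⊗[ℤ_[p]] N)) := (TensorProduct.mk ℤ_[p] M N).compr₂ ι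
  have hγ : ∀ m n, γ m n = (1 : ℚ_[p]) ⊗ₜ[ℤ_[p]] (m ⊗ₜ[ℤ_[p]] n) := fun m n => rfl
  have hγbil : IsDBilinear FM VM FN VN FQ VQ γ := by
    refine ⟨fun m n => ?_, fun m n => ?_, fun m n => ?_⟩
    · rw [hγ, hγ, hFQ, hMfv, ← TensorProduct.smul_tmul', ← TensorProduct.smul_tmul',
        TensorProduct.tmul_smul, hcancel]
    · rw [hγ, hγ, hFQ, hNfv, ← TensorProduct.smul_tmul', TensorProduct.tmul_smul,
        TensorProduct.tmul_smul, hcancel]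
    · rw [hγ, hγ, hVQ]
  obtain ⟨φ, ⟨-, -, hφβ⟩, -⟩ := huniv (ℚ_[p] ⊗[ℤ_[p]] (M ⊗[ℤ_[p]] N)) FQ VQ hQFV hQVF γ hγbil
  have hcomp : φ ∘ₗ TensorProduct.lift β = ι := by
    apply TensorProduct.ext'
    intro m n
    simp only [LinearMap.comp_apply, TensorProduct.lift.tmul, hφβ m n, hγ]
    rfl
  have : Function.Injective (φ ∘ₗ TensorProduct.lift β) := by rw [hcomp]; exact hι
  exact Function.Injective.of_comp this
end
end

section
/- Let I denote Z_p regarded as an R-module with V acting as the identity and F acting as multiplication by p. For every R-module N there is a unique R-linear map I ⊠ N → N sending a ∘ n to a·n, and this map is an isomorphism of R-modules, natural in N; thus I is a unit for the bilinear product ⊠ on the category of R-modules. -/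
set_option synthInstance.maxHeartbeats 1000000
set_option maxHeartbeats 1000000

/-! Statement 11: `I = ℤ_p` with `V = id` and `F = p·id` is a unit for `⊠`: for every
Dieudonné module `N` there is a unique `R`-module map `I ⊠ N → N` with `a ∘ x ↦ a • x`;
it is an isomorphism, natural in `N`. -/

noncomputable section

/-- Every element of a realization `P` of `I ⊠ N` is of the form `β 1 n`. -/
lemma boxtimes_gen {p : ℕ} [Fact p.Prime] {N P : Type}
    [AddCommGroup N] [Module ℤ_[p] N] [AddCommGroup P] [Module ℤ_[p] P]
    (FN VN : Module.End ℤ_[p] N) (FP VP : Module.End ℤ_[p] P)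
    (β : ℤ_[p] →ₗ[ℤ_[p]] N →ₗ[ℤ_[p]] P)
    (hbox : IsBoxtimes p ((p : ℤ_[p]) • (1 : Module.End ℤ_[p] ℤ_[p]))
      (1 : Module.End ℤ_[p] ℤ_[p]) FN VN FP VP β) :
    ∀ q : P, ∃ n : N, β 1 n = q := by
  obtain ⟨⟨hb1, hb2, hb3⟩, hPFV, hPVF, huniv⟩ := hbox
  have hsmul : ∀ (a : ℤ_[p]) (n : N), β a n = a • β 1 n := by
    intro a n
    have h : β a = β (a • (1 : ℤ_[p])) := by rw [smul_eq_mul, mul_one]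
    rw [h, map_smul]; rfl
  set S := LinearMap.range (β 1) with hS
  have hFstab : ∀ x ∈ S, FP x ∈ S := by
    rintro _ ⟨n, rfl⟩
    refine ⟨FN n, ?_⟩
    have := hb1 1 n
    simpa using this.symm
  have hVstab : ∀ x ∈ S, VP x ∈ S := by
    rintro _ ⟨n, rfl⟩
    refine ⟨VN n, ?_⟩
    have := hb3 1 n
    simpa using this.symm
  set FS : Module.End ℤ_[p] S := FP.restrict hFstab with hFS
  set VS : Module.End ℤ_[p] S := VP.restrict hVstab with hVS
  have hPFVapp : ∀ x : P, FP (VP x) = (p : ℤ_[p]) • x := by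
    intro x
    have := DFunLike.congr_fun hPFV x
    simpa [Module.End.mul_apply] using this
  have hPVFapp : ∀ x : P, VP (FP x) = (p : ℤ_[p]) • x := by
    intro x
    have := DFunLike.congr_fun hPVF x
    simpa [Module.End.mul_apply] using this
  have hSFV : FS * VS = (p : ℤ_[p]) • (1 : Module.End ℤ_[p] S) := by
    ext x
    simp only [Module.End.mul_apply, hFS, hVS, LinearMap.restrict_coe_apply,
      LinearMap.smul_apply, Module.End.one_apply, SetLike.val_smul]
    exact hPFVapp x.1
  have hSVF : VS * FS = (p : ℤ_[p]) • (1 : Module.End ℤ_[p] S) := by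
    ext x
    simp only [Module.End.mul_apply, hFS, hVS, LinearMap.restrict_coe_apply,
      LinearMap.smul_apply, Module.End.one_apply, SetLike.val_smul]
    exact hPVFapp x.1
  set σ : N →ₗ[ℤ_[p]] S := (β 1).rangeRestrict with hσ
  set γ : ℤ_[p] →ₗ[ℤ_[p]] N →ₗ[ℤ_[p]] S :=
    LinearMap.toSpanSingleton ℤ_[p] (N →ₗ[ℤ_[p]] S) σ with hγ
  have hγapp : ∀ (a : ℤ_[p]) (n : N), ((γ a n : S) : P) = a • β 1 n := by
    intro a n; simp [hγ, hσ, LinearMap.toSpanSingleton_apply]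
  have hFSval : ∀ s : S, ((FS s : S) : P) = FP s := fun s => rfl
  have hVSval : ∀ s : S, ((VS s : S) : P) = VP s := fun s => rfl
  have hFβ : ∀ n : N, FP (β 1 n) = β 1 (FN n) := by
    intro n; have := hb1 1 n; simpa using this
  have hVβ : ∀ n : N, VP (β 1 n) = β 1 (VN n) := by
    intro n; have := hb3 1 n; simpa using this
  have hFβ2 : ∀ n : N, FP (β 1 (VN n)) = (p : ℤ_[p]) • β 1 n := by
    intro n
    have := hb2 1 n
    simp only [Module.End.one_apply, LinearMap.smul_apply] at this
    rw [this, hsmul]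
    simp [smul_smul]
  have hγbil : IsDBilinear ((p : ℤ_[p]) • (1 : Module.End ℤ_[p] ℤ_[p]))
      (1 : Module.End ℤ_[p] ℤ_[p]) FN VN FS VS γ := by
    refine ⟨fun a n => ?_, fun a n => ?_, fun a n => ?_⟩
    · apply Subtype.ext
      rw [hFSval]
      simp only [Module.End.one_apply]
      rw [hγapp, hγapp, map_smul, hFβ]
    · apply Subtype.ext
      rw [hFSval, hγapp, hγapp, map_smul, hFβ2]
      simp [smul_smul, mul_comm]
    · apply Subtype.ext
      rw [hVSval, hγapp]
      simp only [Module.End.one_apply]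
      rw [hγapp, map_smul, hVβ]
  obtain ⟨φ, ⟨hφF, hφV, hφβ⟩, -⟩ := huniv S FS VS hSFV hSVF γ hγbil
  obtain ⟨φ₀, -, hun⟩ := huniv P FP VP hPFV hPVF β ⟨hb1, hb2, hb3⟩
  have h1 : S.subtype ∘ₗ φ = LinearMap.id := by
    have key : ∀ ψ : P →ₗ[ℤ_[p]] P,
        (ψ ∘ₗ (FP : P →ₗ[ℤ_[p]] P) = (FP : P →ₗ[ℤ_[p]] P) ∘ₗ ψ ∧
         ψ ∘ₗ (VP : P →ₗ[ℤ_[p]] P) = (VP : P →ₗ[ℤ_[p]] P) ∘ₗ ψ ∧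
         ∀ a n, ψ (β a n) = β a n) → ψ = φ₀ := hun
    have hA : (S.subtype ∘ₗ φ) ∘ₗ (FP : P →ₗ[ℤ_[p]] P)
        = (FP : P →ₗ[ℤ_[p]] P) ∘ₗ (S.subtype ∘ₗ φ) := by
      ext x
      have := DFunLike.congr_fun hφF x
      simp only [LinearMap.comp_apply] at this ⊢
      rw [this]
      exact (hFSval _)
    have hB : (S.subtype ∘ₗ φ) ∘ₗ (VP : P →ₗ[ℤ_[p]] P)
        = (VP : P →ₗ[ℤ_[p]] P) ∘ₗ (S.subtype ∘ₗ φ) := by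
      ext x
      have := DFunLike.congr_fun hφV x
      simp only [LinearMap.comp_apply] at this ⊢
      rw [this]
      exact (hVSval _)
    have hC : ∀ a n, (S.subtype ∘ₗ φ) (β a n) = β a n := by
      intro a n
      simp only [LinearMap.comp_apply, Submodule.subtype_apply]
      rw [hφβ, hγapp, ← hsmul]
    have e1 := key (S.subtype ∘ₗ φ) ⟨hA, hB, hC⟩
    have e2 := key LinearMap.id ⟨by ext x; rfl, by ext x; rfl, fun a n => rfl⟩
    rw [e1, e2]
  intro q
  have hq : ((φ q : S) : P) = q := DFunLike.congr_fun h1 q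
  obtain ⟨n, hn⟩ := (φ q).2
  exact ⟨n, by rw [hn, hq]⟩

theorem statement11 (p : ℕ) [Fact p.Prime] (hp : Odd p)
    {N P : Type} [AddCommGroup N] [Module ℤ_[p] N] [AddCommGroup P] [Module ℤ_[p] P]
    (FN VN : Module.End ℤ_[p] N)
    (hN : FN * VN = (p : ℤ_[p]) • (1 : Module.End ℤ_[p] N))
    (hN' : VN * FN = (p : ℤ_[p]) • (1 : Module.End ℤ_[p] N))
    (FP VP : Module.End ℤ_[p] P) (β : ℤ_[p] →ₗ[ℤ_[p]] N →ₗ[ℤ_[p]] P)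
    -- `(P, β)` is the bilinear product `I ⊠ N`,
    -- where `I = ℤ_p` with `F = p·id` and `V = id`.
    (hbox : IsBoxtimes p ((p : ℤ_[p]) • (1 : Module.End ℤ_[p] ℤ_[p]))
      (1 : Module.End ℤ_[p] ℤ_[p]) FN VN FP VP β) :
    -- there is a unique `R`-module map `I ⊠ N → N` with `β a x ↦ a • x` ...
    (∃! θ : P →ₗ[ℤ_[p]] N,
      θ ∘ₗ (FP : P →ₗ[ℤ_[p]] P) = (FN : N →ₗ[ℤ_[p]] N) ∘ₗ θ ∧
      θ ∘ₗ (VP : P →ₗ[ℤ_[p]] P) = (VN : N →ₗ[ℤ_[p]] N) ∘ₗ θ ∧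
      ∀ (a : ℤ_[p]) (x : N), θ (β a x) = a • x) ∧
    -- ... and any such map is an isomorphism ...
    (∀ θ : P →ₗ[ℤ_[p]] N,
      (θ ∘ₗ (FP : P →ₗ[ℤ_[p]] P) = (FN : N →ₗ[ℤ_[p]] N) ∘ₗ θ ∧
       θ ∘ₗ (VP : P →ₗ[ℤ_[p]] P) = (VN : N →ₗ[ℤ_[p]] N) ∘ₗ θ ∧
       ∀ (a : ℤ_[p]) (x : N), θ (β a x) = a • x) →
      Function.Bijective θ) ∧
    -- ... naturally in `N`: it intertwines the maps induced by any `R`-module map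
    -- `g : N → N'`.
    (∀ (N' P' : Type) [AddCommGroup N'] [Module ℤ_[p] N'] [AddCommGroup P'] [Module ℤ_[p] P'],
      ∀ (FN' VN' : Module.End ℤ_[p] N') (FP' VP' : Module.End ℤ_[p] P')
        (β' : ℤ_[p] →ₗ[ℤ_[p]] N' →ₗ[ℤ_[p]] P'),
        IsBoxtimes p ((p : ℤ_[p]) • (1 : Module.End ℤ_[p] ℤ_[p]))
          (1 : Module.End ℤ_[p] ℤ_[p]) FN' VN' FP' VP' β' →
        ∀ g : N →ₗ[ℤ_[p]] N',
          g ∘ₗ (FN : N →ₗ[ℤ_[p]] N) = (FN' : N' →ₗ[ℤ_[p]] N') ∘ₗ g →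
          g ∘ₗ (VN : N →ₗ[ℤ_[p]] N) = (VN' : N' →ₗ[ℤ_[p]] N') ∘ₗ g →
        ∀ ψ : P →ₗ[ℤ_[p]] P',
          ψ ∘ₗ (FP : P →ₗ[ℤ_[p]] P) = (FP' : P' →ₗ[ℤ_[p]] P') ∘ₗ ψ →
          ψ ∘ₗ (VP : P →ₗ[ℤ_[p]] P) = (VP' : P' →ₗ[ℤ_[p]] P') ∘ₗ ψ →
          (∀ (a : ℤ_[p]) (x : N), ψ (β a x) = β' a (g x)) →
        ∀ (θ : P →ₗ[ℤ_[p]] N) (θ' : P' →ₗ[ℤ_[p]] N'),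
          (∀ (a : ℤ_[p]) (x : N), θ (β a x) = a • x) →
          (∀ (a : ℤ_[p]) (x : N'), θ' (β' a x) = a • x) →
          θ' ∘ₗ ψ = g ∘ₗ θ) := by
  have hgen := boxtimes_gen FN VN FP VP β hbox
  obtain ⟨⟨hb1, hb2, hb3⟩, hPFV, hPVF, huniv⟩ := hbox
  have hNFVapp : ∀ x : N, FN (VN x) = (p : ℤ_[p]) • x := by
    intro x
    have := DFunLike.congr_fun hN x
    simpa [Module.End.mul_apply] using this
  -- the scalar action is Dieudonné-bilinear
  have hγbil : IsDBilinear ((p : ℤ_[p]) • (1 : Module.End ℤ_[p] ℤ_[p]))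
      (1 : Module.End ℤ_[p] ℤ_[p]) FN VN FN VN (LinearMap.lsmul ℤ_[p] N) := by
    refine ⟨fun a n => ?_, fun a n => ?_, fun a n => ?_⟩
    · simp [LinearMap.lsmul_apply]
    · simp only [LinearMap.lsmul_apply, LinearMap.smul_apply, Module.End.one_apply,
        map_smul, hNFVapp, smul_smul]
      rw [mul_comm]
    · simp [LinearMap.lsmul_apply]
  obtain ⟨θ₀, ⟨hθ₀F, hθ₀V, hθ₀β⟩, -⟩ := huniv N FN VN hN hN' (LinearMap.lsmul ℤ_[p] N) hγbil
  have hθ₀β' : ∀ (a : ℤ_[p]) (x : N), θ₀ (β a x) = a • x := fun a x => hθ₀β a x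
  refine ⟨⟨θ₀, ⟨hθ₀F, hθ₀V, hθ₀β'⟩, ?_⟩, ?_, ?_⟩
  · -- uniqueness: any map with the `β` property agrees on generators `β 1 n`
    rintro θ ⟨-, -, hθ⟩
    ext q
    obtain ⟨n, rfl⟩ := hgen q
    simp [hθ, hθ₀β']
  · -- bijectivity
    rintro θ ⟨-, -, hθ⟩
    have hsec : ∀ n : N, θ (β 1 n) = n := by intro n; rw [hθ, one_smul]
    constructor
    · intro q q' h
      obtain ⟨n, rfl⟩ := hgen q
      obtain ⟨n', rfl⟩ := hgen q'
      rw [hsec, hsec] at h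
      rw [h]
    · intro n
      exact ⟨β 1 n, hsec n⟩
  · -- naturality
    intro N' P' _ _ _ _ FN' VN' FP' VP' β' hbox' g hgF hgV ψ hψF hψV hψβ θ θ' hθ hθ'
    ext q
    obtain ⟨n, rfl⟩ := hgen q
    simp only [LinearMap.comp_apply]
    simp [hψβ, hθ', hθ]
end
end

section
/- Let M₀ = Z_p/p ≅ F_p regarded as an R-module on which both F and V act as zero. Then M₀ ⊠ M₀ is isomorphic as an R-module to R/(p, V) ≅ F_p[F]; in particular M₀ ⊠ M₀ is infinite-dimensional as an F_p-vector space, with basis the classes of F^l ⊗ (1̄ ⊗ 1̄) for l ≥ 0. (This is the Dieudonné-module form of the statement that for H = k[x]/x^p with x primitive, H ⊠ H ≅ k[x] with x primitive.) -/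
set_option synthInstance.maxHeartbeats 1000000
set_option maxHeartbeats 1000000

/-! Statement 14: for `M₀ = ℤ_p/p ≅ F_p` with `F = V = 0`, the bilinear product
`M₀ ⊠ M₀` is isomorphic as an `R`-module to `R/(p,V) ≅ F_p[F]`; in particular it is an
infinite-dimensional `F_p`-vector space with basis the classes of `F^l ⊗ (1̄ ⊗ 1̄)`,
`l ≥ 0`. -/

noncomputable section

/-- The defining ideal `(FV - p)` of the Dieudonné ring, inside `ℤ_p[V][F]`
(the outer polynomial variable is `F`, the inner one is `V`). -/
def DIdeal (p : ℕ) [Fact p.Prime] : Ideal (Polynomial (Polynomial ℤ_[p])) :=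
  Ideal.span {Polynomial.X * Polynomial.C Polynomial.X -
    Polynomial.C (Polynomial.C (p : ℤ_[p]))}

/-- The Dieudonné ring `R = ℤ_p[F,V]/(FV - p)` over the prime field `F_p`. -/
abbrev DRing (p : ℕ) [Fact p.Prime] : Type :=
  Polynomial (Polynomial ℤ_[p]) ⧸ DIdeal p

instance DRing.isTwoSided (p : ℕ) [Fact p.Prime] (I : Ideal (DRing p)) : I.IsTwoSided :=
  ⟨fun b ha ↦ mul_comm b _ ▸ I.smul_mem _ ha⟩

/-- The element `F` of the Dieudonné ring. -/
def DRing.FF (p : ℕ) [Fact p.Prime] : DRing p :=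
  Ideal.Quotient.mk (DIdeal p) Polynomial.X

/-- The element `V` of the Dieudonné ring. -/
def DRing.VV (p : ℕ) [Fact p.Prime] : DRing p :=
  Ideal.Quotient.mk (DIdeal p) (Polynomial.C Polynomial.X)

/-- `M₀ = ℤ_p/p ≅ F_p`. -/
abbrev Mzero (p : ℕ) [Fact p.Prime] : Type :=
  ℤ_[p] ⧸ (Ideal.span {(p : ℤ_[p])} : Ideal ℤ_[p])

/-- The class `1̄ ∈ M₀`. -/
def MzeroOne (p : ℕ) [Fact p.Prime] : Mzero p :=
  Ideal.Quotient.mk (Ideal.span {(p : ℤ_[p])}) 1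


/-! The map `(a, b) ↦ ab` from `M₀ × M₀` to `R/(p, V)` is Dieudonné-bilinear, since `F` and `V`
vanish on `M₀` and `V` vanishes on `R/(p, V)`; it induces `φ : M₀ ⊠ M₀ → R/(p, V)`. Conversely
`p` and `V` kill `1̄ ∘ 1̄`, so `r ↦ r • (1̄ ∘ 1̄)` descends to `ψ : R/(p, V) → M₀ ⊠ M₀`. A
`ℤ_p`-linear map commuting with `F` and `V` is `R`-linear, so `ψ ∘ φ` is the identity by the
uniqueness in the universal property and `φ ∘ ψ` is the identity because `R/(p, V)` is cyclic.
Finally `R/(p, V)` is spanned over `ℤ_p` by the powers of `F` (as `V` acts by `0`), and reducing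
to `F_p[X]` via `F ↦ X`, `V ↦ 0` shows that these powers are independent modulo `p`. -/

open DistribMulAction (toModuleEnd)

namespace DRing

variable {p : ℕ} [Fact p.Prime]

theorem FF_mul_VV : FF p * VV p = p := by
  have h : Ideal.Quotient.mk (DIdeal p)
      (Polynomial.X * Polynomial.C Polynomial.X - Polynomial.C (Polynomial.C (p : ℤ_[p]))) = 0 :=
    Ideal.Quotient.eq_zero_iff_mem.mpr (Ideal.subset_span rfl)
  rwa [map_sub, map_mul, sub_eq_zero, Polynomial.C_eq_natCast, Polynomial.C_eq_natCast,
    map_natCast] at h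

@[elab_as_elim]
theorem induction_on {motive : DRing p → Prop} (r : DRing p)
    (scalar : ∀ c : ℤ_[p], motive ((algebraMap ℤ_[p] (DRing p) : ℤ_[p] →+* DRing p) c))
    (F : motive (FF p)) (V : motive (VV p))
    (add : ∀ r s, motive r → motive s → motive (r + s))
    (mul : ∀ r s, motive r → motive s → motive (r * s)) : motive r := by
  obtain ⟨a, rfl⟩ := Ideal.Quotient.mk_surjective r
  induction a using Polynomial.induction_on with
  | C q =>
    induction q using Polynomial.induction_on with
    | C c => exact scalar c
    | add q₁ q₂ h₁ h₂ => simpa only [map_add] using add _ _ h₁ h₂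
    | monomial n c ih =>
      rw [pow_succ, ← mul_assoc, map_mul, map_mul]
      exact mul _ _ ih V
  | add a b ha hb => simpa only [map_add] using add _ _ ha hb
  | monomial n q ih =>
    rw [pow_succ, ← mul_assoc, map_mul]
    exact mul _ _ ih F

section Module

variable {M N : Type*} [AddCommGroup M] [Module (DRing p) M] [Module ℤ_[p] M]
  [IsScalarTower ℤ_[p] (DRing p) M] [AddCommGroup N] [Module (DRing p) N] [Module ℤ_[p] N]
  [IsScalarTower ℤ_[p] (DRing p) N]

theorem natCast_smul_eq (x : M) : (p : DRing p) • x = (p : ℤ_[p]) • x := by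
  rw [← algebraMap_smul (DRing p), map_natCast]

theorem toModuleEnd_mul_toModuleEnd {r s : DRing p} (h : r * s = p) :
    toModuleEnd ℤ_[p] M r * toModuleEnd ℤ_[p] M s = (p : ℤ_[p]) • (1 : Module.End ℤ_[p] M) := by
  ext x
  rw [← map_mul, h, DistribMulAction.toModuleEnd_apply, DistribSMul.toLinearMap_apply,
    natCast_smul_eq]
  rfl

theorem smul_mem_of_FF_VV (S : Submodule ℤ_[p] M) (hF : ∀ x ∈ S, FF p • x ∈ S)
    (hV : ∀ x ∈ S, VV p • x ∈ S) (r : DRing p) {x : M} (hx : x ∈ S) : r • x ∈ S := by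
  induction r using induction_on generalizing x with
  | scalar c => simpa only [algebraMap_smul] using S.smul_mem c hx
  | F => exact hF x hx
  | V => exact hV x hx
  | add r s hr hs => simpa only [add_smul] using S.add_mem (hr hx) (hs hx)
  | mul r s hr hs => simpa only [mul_smul] using hr (hs hx)

def linearMapOfCommute (f : M →ₗ[ℤ_[p]] N)
    (hF : f ∘ₗ toModuleEnd ℤ_[p] M (FF p) = toModuleEnd ℤ_[p] N (FF p) ∘ₗ f)
    (hV : f ∘ₗ toModuleEnd ℤ_[p] M (VV p) = toModuleEnd ℤ_[p] N (VV p) ∘ₗ f) :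
    M →ₗ[DRing p] N where
  toFun := f
  map_add' := f.map_add
  map_smul' r x := by
    induction r using induction_on generalizing x with
    | scalar c => simp only [algebraMap_smul, map_smul, RingHom.id_apply]
    | F => exact LinearMap.congr_fun hF x
    | V => exact LinearMap.congr_fun hV x
    | add r s hr hs => simp only [add_smul, map_add, hr, hs, RingHom.id_apply]
    | mul r s hr hs => simp only [mul_smul, hr, hs, RingHom.id_apply]

theorem restrictScalars_comp_toModuleEnd (f : M →ₗ[DRing p] N) (r : DRing p) :
    f.restrictScalars ℤ_[p] ∘ₗ toModuleEnd ℤ_[p] M r =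
      toModuleEnd ℤ_[p] N r ∘ₗ f.restrictScalars ℤ_[p] :=
  LinearMap.ext (f.map_smul r)

end Module

def toPolynomialZMod : DRing p →+* Polynomial (ZMod p) :=
  Ideal.Quotient.lift (DIdeal p)
    (Polynomial.mapRingHom (PadicInt.toZMod.comp (Polynomial.evalRingHom 0))) <| by
    intro a ha
    obtain ⟨b, rfl⟩ := Ideal.mem_span_singleton'.mp ha
    simp

@[simp] theorem toPolynomialZMod_algebraMap (c : ℤ_[p]) :
    toPolynomialZMod ((algebraMap ℤ_[p] (DRing p) : ℤ_[p] →+* DRing p) c) =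
      Polynomial.C (PadicInt.toZMod c) := by
  change toPolynomialZMod (Ideal.Quotient.mk _ (Polynomial.C (Polynomial.C c))) = _
  simp [toPolynomialZMod]

@[simp] theorem toPolynomialZMod_FF : toPolynomialZMod (FF p) = Polynomial.X := by
  simp [toPolynomialZMod, FF]

@[simp] theorem toPolynomialZMod_VV : toPolynomialZMod (VV p) = 0 := by
  simp [toPolynomialZMod, VV]

abbrev idealPV (p : ℕ) [Fact p.Prime] : Ideal (DRing p) := Ideal.span {(p : DRing p), VV p}

abbrev ModPV (p : ℕ) [Fact p.Prime] : Type := DRing p ⧸ idealPV p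

namespace ModPV

def toPolynomialZMod : ModPV p →+* Polynomial (ZMod p) :=
  Ideal.Quotient.lift (idealPV p) DRing.toPolynomialZMod fun _ ha ↦
    (Ideal.span_le (I := RingHom.ker DRing.toPolynomialZMod)).mpr (by
      rintro _ (rfl | rfl)
      · exact (map_natCast (DRing.toPolynomialZMod (p := p)) p).trans (CharP.cast_eq_zero _ p)
      · exact toPolynomialZMod_VV) ha

theorem toPolynomialZMod_smul (r : DRing p) (q : ModPV p) :
    toPolynomialZMod (r • q) = DRing.toPolynomialZMod r * toPolynomialZMod q := by
  obtain ⟨s, rfl⟩ := Ideal.Quotient.mk_surjective q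
  exact map_mul DRing.toPolynomialZMod r s

theorem toPolynomialZMod_smul_FF_pow_smul_one (c : ℤ_[p]) (l : ℕ) :
    toPolynomialZMod (c • FF p ^ l • (1 : ModPV p)) =
      Polynomial.C (PadicInt.toZMod c) * Polynomial.X ^ l := by
  rw [← algebraMap_smul (DRing p), toPolynomialZMod_smul, toPolynomialZMod_smul, map_one, mul_one]
  simp

theorem smul_eq_zero_of_mem {r : DRing p} (hr : r ∈ idealPV p) (q : ModPV p) : r • q = 0 := by
  obtain ⟨s, rfl⟩ := Ideal.Quotient.mk_surjective q
  exact Ideal.Quotient.eq_zero_iff_mem.mpr (Ideal.mul_mem_right s _ hr)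

theorem VV_smul (q : ModPV p) : VV p • q = 0 :=
  smul_eq_zero_of_mem (Ideal.subset_span (Set.mem_insert_of_mem _ rfl)) q

theorem natCast_smul (q : ModPV p) : (p : ℤ_[p]) • q = 0 := by
  rw [← natCast_smul_eq]
  exact smul_eq_zero_of_mem (Ideal.subset_span (Set.mem_insert _ _)) q

theorem linearCombination_FF_pow_surjective :
    Function.Surjective (Finsupp.linearCombination ℤ_[p] fun l : ℕ ↦ FF p ^ l • (1 : ModPV p)) := by
  rw [← LinearMap.range_eq_top, Finsupp.range_linearCombination, eq_top_iff]
  rintro q -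
  obtain ⟨r, rfl⟩ := Ideal.Quotient.mk_surjective q
  have hone :
      (1 : ModPV p) ∈ Submodule.span ℤ_[p] (Set.range fun l : ℕ ↦ FF p ^ l • (1 : ModPV p)) :=
    Submodule.subset_span ⟨0, by simp only [pow_zero, one_smul]⟩
  have hr : r • (1 : ModPV p) = Ideal.Quotient.mk _ r :=
    congrArg (Ideal.Quotient.mk _) (mul_one r)
  refine hr ▸ smul_mem_of_FF_VV _ (fun x hx ↦ ?_) (fun x _ ↦ VV_smul x ▸ Submodule.zero_mem _) r hone
  induction hx using Submodule.span_induction with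
  | mem _ h =>
    obtain ⟨l, rfl⟩ := h
    exact Submodule.subset_span ⟨l + 1, by simp only [pow_succ', mul_smul]⟩
  | zero => simp
  | add x y _ _ hx hy => simpa only [smul_add] using Submodule.add_mem _ hx hy
  | smul a x _ hx => simpa only [smul_comm (FF p) a x] using Submodule.smul_mem _ a hx

theorem natCast_dvd_of_linearCombination_FF_pow_eq_zero {c : ℕ →₀ ℤ_[p]}
    (hc : Finsupp.linearCombination ℤ_[p] (fun l : ℕ ↦ FF p ^ l • (1 : ModPV p)) c = 0)
    (l : ℕ) : (p : ℤ_[p]) ∣ c l := by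
  have h := congrArg (fun q ↦ Polynomial.lcoeff (ZMod p) l (toPolynomialZMod q)) hc
  simp only [Finsupp.linearCombination_apply, map_finsuppSum,
    toPolynomialZMod_smul_FF_pow_smul_one, Polynomial.lcoeff_apply,
    Polynomial.coeff_C_mul_X_pow, Finsupp.sum_ite_eq, map_zero] at h
  rw [← Ideal.mem_span_singleton, ← PadicInt.maximalIdeal_eq_span_p, ← PadicInt.ker_toZMod,
    RingHom.mem_ker]
  split_ifs at h with hl
  · exact h
  · exact Finsupp.notMem_support_iff.mp hl ▸ map_zero _

def ofMzero : Mzero p →ₗ[ℤ_[p]] ModPV p :=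
  Submodule.liftQ _ (LinearMap.toSpanSingleton ℤ_[p] _ 1) <|
    Submodule.span_le.mpr <| Set.singleton_subset_iff.mpr <| natCast_smul 1

def mulMzero : Mzero p →ₗ[ℤ_[p]] Mzero p →ₗ[ℤ_[p]] ModPV p :=
  (LinearMap.mul ℤ_[p] (Mzero p)).compr₂ ofMzero

theorem mulMzero_one_one : mulMzero (MzeroOne p) (MzeroOne p) = 1 := by
  change ofMzero (Submodule.Quotient.mk (1 * 1)) = 1
  rw [ofMzero, Submodule.liftQ_apply, LinearMap.toSpanSingleton_apply, mul_one, one_smul]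

theorem isDBilinear_mulMzero :
    IsDBilinear (0 : Module.End ℤ_[p] (Mzero p)) 0 0 0
      (toModuleEnd ℤ_[p] (ModPV p) (FF p)) (toModuleEnd ℤ_[p] (ModPV p) (VV p)) mulMzero :=
  ⟨fun _ _ ↦ by simp, fun _ _ ↦ by simp, fun _ _ ↦ by simp [VV_smul]⟩

end ModPV

end DRing

theorem Mzero.natCast_smul {p : ℕ} [Fact p.Prime] (m : Mzero p) : (p : ℤ_[p]) • m = 0 := by
  obtain ⟨a, rfl⟩ := Ideal.Quotient.mk_surjective m
  exact Ideal.Quotient.eq_zero_iff_mem.mpr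
    (Ideal.mul_mem_right _ _ (Ideal.mem_span_singleton_self _))

theorem Mzero.bilinear_ext {p : ℕ} [Fact p.Prime] {W : Type*} [AddCommGroup W] [Module ℤ_[p] W]
    {β₁ β₂ : Mzero p →ₗ[ℤ_[p]] Mzero p →ₗ[ℤ_[p]] W}
    (h : β₁ (MzeroOne p) (MzeroOne p) = β₂ (MzeroOne p) (MzeroOne p)) : β₁ = β₂ :=
  Submodule.linearMap_qext _ <| LinearMap.ext_ring <|
    Submodule.linearMap_qext _ <| LinearMap.ext_ring h

theorem IsBoxtimes.hom_ext {p : ℕ} [Fact p.Prime] {M N P Q : Type}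
    [AddCommGroup M] [Module ℤ_[p] M] [AddCommGroup N] [Module ℤ_[p] N]
    [AddCommGroup P] [Module ℤ_[p] P] [AddCommGroup Q] [Module ℤ_[p] Q]
    {FM VM : Module.End ℤ_[p] M} {FN VN : Module.End ℤ_[p] N}
    {FP VP : Module.End ℤ_[p] P} {β : M →ₗ[ℤ_[p]] N →ₗ[ℤ_[p]] P}
    (hbox : IsBoxtimes p FM VM FN VN FP VP β) {FQ VQ : Module.End ℤ_[p] Q}
    (hFV : FQ * VQ = (p : ℤ_[p]) • (1 : Module.End ℤ_[p] Q))
    (hVF : VQ * FQ = (p : ℤ_[p]) • (1 : Module.End ℤ_[p] Q)) {f g : P →ₗ[ℤ_[p]] Q}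
    (hfF : f ∘ₗ FP = FQ ∘ₗ f) (hfV : f ∘ₗ VP = VQ ∘ₗ f)
    (hgF : g ∘ₗ FP = FQ ∘ₗ g) (hgV : g ∘ₗ VP = VQ ∘ₗ g) (hfg : β.compr₂ f = β.compr₂ g) :
    f = g := by
  obtain ⟨⟨hβF₁, hβF₂, hβV⟩, -, -, huniv⟩ := hbox
  have hgF' (x : P) : FQ (g x) = g (FP x) := (LinearMap.congr_fun hgF x).symm
  have hgV' (x : P) : VQ (g x) = g (VP x) := (LinearMap.congr_fun hgV x).symm
  have hγ : IsDBilinear FM VM FN VN FQ VQ (β.compr₂ g) :=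
    ⟨fun m n ↦ by simp only [LinearMap.compr₂_apply, hgF', hβF₁],
      fun m n ↦ by simp only [LinearMap.compr₂_apply, hgF', hβF₂],
      fun m n ↦ by simp only [LinearMap.compr₂_apply, hgV', hβV]⟩
  exact (huniv Q FQ VQ hFV hVF _ hγ).unique
    ⟨hfF, hfV, fun m n ↦ LinearMap.congr_fun₂ hfg m n⟩ ⟨hgF, hgV, fun _ _ ↦ rfl⟩

theorem IsBoxtimes.exists_linearEquiv_modPV {p : ℕ} [Fact p.Prime] {P : Type} [AddCommGroup P]
    [Module ℤ_[p] P] [Module (DRing p) P] [IsScalarTower ℤ_[p] (DRing p) P]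
    {β : Mzero p →ₗ[ℤ_[p]] Mzero p →ₗ[ℤ_[p]] P}
    (hbox : IsBoxtimes p 0 0 0 0 (toModuleEnd ℤ_[p] P (DRing.FF p))
      (toModuleEnd ℤ_[p] P (DRing.VV p)) β) :
    ∃ e : DRing.ModPV p ≃ₗ[DRing p] P, e 1 = β (MzeroOne p) (MzeroOne p) := by
  set v := β (MzeroOne p) (MzeroOne p)
  have hker : DRing.idealPV p ≤ LinearMap.ker (LinearMap.toSpanSingleton (DRing p) P v) := by
    refine Submodule.span_le.mpr ?_
    rintro _ (rfl | rfl) <;> simp only [SetLike.mem_coe, LinearMap.mem_ker,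
      LinearMap.toSpanSingleton_apply]
    · rw [DRing.natCast_smul_eq, ← LinearMap.smul_apply, ← map_smul, Mzero.natCast_smul,
        map_zero, LinearMap.zero_apply]
    · exact (hbox.1.2.2 _ _).trans (by simp)
  let ψ : DRing.ModPV p →ₗ[DRing p] P := (DRing.idealPV p).liftQ _ hker
  have hψ : ψ 1 = v := one_smul _ v
  obtain ⟨φ, ⟨hφF, hφV, hφβ⟩, -⟩ := hbox.2.2.2 _ _ _
    (DRing.toModuleEnd_mul_toModuleEnd DRing.FF_mul_VV)
    (DRing.toModuleEnd_mul_toModuleEnd (mul_comm (DRing.VV p) _ ▸ DRing.FF_mul_VV))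
    _ DRing.ModPV.isDBilinear_mulMzero
  let φR := DRing.linearMapOfCommute φ hφF hφV
  have hφ : φR v = 1 := (hφβ _ _).trans DRing.ModPV.mulMzero_one_one
  refine ⟨LinearEquiv.ofLinearMap ψ φR ?_ ?_, hψ⟩
  · refine LinearMap.restrictScalars_injective ℤ_[p] <| hbox.hom_ext hbox.2.1 hbox.2.2.1
      (DRing.restrictScalars_comp_toModuleEnd _ _) (DRing.restrictScalars_comp_toModuleEnd _ _)
      (DRing.restrictScalars_comp_toModuleEnd LinearMap.id _)
      (DRing.restrictScalars_comp_toModuleEnd LinearMap.id _) (Mzero.bilinear_ext ?_)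
    change ψ (φR v) = v
    rw [hφ, hψ]
  · refine Submodule.linearMap_qext _ (LinearMap.ext_ring ?_)
    change φR (ψ 1) = 1
    rw [hψ, hφ]

theorem statement14_general (p : ℕ) [Fact p.Prime]
    {P : Type} [AddCommGroup P] [Module ℤ_[p] P]
    (FP VP : Module.End ℤ_[p] P)
    (β : Mzero p →ₗ[ℤ_[p]] Mzero p →ₗ[ℤ_[p]] P)
    -- `(P, β)` is the bilinear product `M₀ ⊠ M₀`, where `F` and `V` act as zero on `M₀`
    (hbox : IsBoxtimes p (0 : Module.End ℤ_[p] (Mzero p)) (0 : Module.End ℤ_[p] (Mzero p))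
      (0 : Module.End ℤ_[p] (Mzero p)) (0 : Module.End ℤ_[p] (Mzero p)) FP VP β)
    -- the (unique) `R`-module structure on `P` extending its Dieudonné structure
    [Module (DRing p) P] [IsScalarTower ℤ_[p] (DRing p) P]
    (hFs : ∀ x : P, DRing.FF p • x = FP x) (hVs : ∀ x : P, DRing.VV p • x = VP x) :
    -- `M₀ ⊠ M₀ ≅ R/(p, V)` as `R`-modules, via `1 ↦ 1̄ ∘ 1̄`
    (∃ e : (DRing p ⧸ (Ideal.span {(p : DRing p), DRing.VV p} : Ideal (DRing p)))
        ≃ₗ[DRing p] P,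
      e (Ideal.Quotient.mk (Ideal.span {(p : DRing p), DRing.VV p}) 1) =
        β (MzeroOne p) (MzeroOne p)) ∧
    -- in particular `M₀ ⊠ M₀` is an `F_p`-vector space (`p` acts as zero) ...
    (∀ x : P, (p : ℤ_[p]) • x = 0) ∧
    -- ... of infinite dimension, with basis the elements `F^l (1̄ ∘ 1̄)`, `l ≥ 0`:
    -- they span over `F_p` ...
    (∀ x : P, ∃ c : ℕ →₀ ℤ_[p],
      x = c.sum fun l a => a • (FP ^ l) (β (MzeroOne p) (MzeroOne p))) ∧
    -- ... and are linearly independent over `F_p`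
    (∀ c : ℕ →₀ ℤ_[p],
      (c.sum fun l a => a • (FP ^ l) (β (MzeroOne p) (MzeroOne p))) = 0 →
      ∀ l, (p : ℤ_[p]) ∣ c l) := by
  obtain rfl : FP = toModuleEnd ℤ_[p] P (DRing.FF p) := LinearMap.ext fun x ↦ (hFs x).symm
  obtain rfl : VP = toModuleEnd ℤ_[p] P (DRing.VV p) := LinearMap.ext fun x ↦ (hVs x).symm
  obtain ⟨e, he⟩ := hbox.exists_linearEquiv_modPV
  have he_sum (c : ℕ →₀ ℤ_[p]) :
      e (Finsupp.linearCombination ℤ_[p] (fun l : ℕ ↦ DRing.FF p ^ l • (1 : DRing.ModPV p)) c) =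
        c.sum fun l a ↦ a • (toModuleEnd ℤ_[p] P (DRing.FF p) ^ l) (β (MzeroOne p) (MzeroOne p)) := by
    rw [Finsupp.linearCombination_apply, map_finsuppSum]
    refine Finsupp.sum_congr fun l _ ↦ ?_
    rw [← map_pow, ← LinearEquiv.coe_coe, LinearMap.map_smul_of_tower, LinearEquiv.coe_coe,
      map_smul, he]
    rfl
  refine ⟨⟨e, he⟩, fun x ↦ ?_, fun x ↦ ?_, fun c hc l ↦ ?_⟩
  · obtain ⟨q, rfl⟩ := e.surjective x
    rw [← LinearEquiv.coe_coe, ← LinearMap.map_smul_of_tower, DRing.ModPV.natCast_smul, map_zero]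
  · obtain ⟨q, rfl⟩ := e.surjective x
    obtain ⟨c, rfl⟩ := DRing.ModPV.linearCombination_FF_pow_surjective q
    exact ⟨c, he_sum c⟩
  · refine DRing.ModPV.natCast_dvd_of_linearCombination_FF_pow_eq_zero (e.injective ?_) l
    rw [he_sum, hc, map_zero]

theorem statement14 (p : ℕ) [Fact p.Prime] (hp : Odd p)
    {P : Type} [AddCommGroup P] [Module ℤ_[p] P]
    (FP VP : Module.End ℤ_[p] P)
    (β : Mzero p →ₗ[ℤ_[p]] Mzero p →ₗ[ℤ_[p]] P)
    -- `(P, β)` is the bilinear product `M₀ ⊠ M₀`, where `F` and `V` act as zero on `M₀`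
    (hbox : IsBoxtimes p (0 : Module.End ℤ_[p] (Mzero p)) (0 : Module.End ℤ_[p] (Mzero p))
      (0 : Module.End ℤ_[p] (Mzero p)) (0 : Module.End ℤ_[p] (Mzero p)) FP VP β)
    -- the (unique) `R`-module structure on `P` extending its Dieudonné structure
    [Module (DRing p) P] [IsScalarTower ℤ_[p] (DRing p) P]
    (hFs : ∀ x : P, DRing.FF p • x = FP x) (hVs : ∀ x : P, DRing.VV p • x = VP x) :
    -- `M₀ ⊠ M₀ ≅ R/(p, V)` as `R`-modules, via `1 ↦ 1̄ ∘ 1̄`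
    (∃ e : (DRing p ⧸ (Ideal.span {(p : DRing p), DRing.VV p} : Ideal (DRing p)))
        ≃ₗ[DRing p] P,
      e (Ideal.Quotient.mk (Ideal.span {(p : DRing p), DRing.VV p}) 1) =
        β (MzeroOne p) (MzeroOne p)) ∧
    -- in particular `M₀ ⊠ M₀` is an `F_p`-vector space (`p` acts as zero) ...
    (∀ x : P, (p : ℤ_[p]) • x = 0) ∧
    -- ... of infinite dimension, with basis the elements `F^l (1̄ ∘ 1̄)`, `l ≥ 0`:
    -- they span over `F_p` ...
    (∀ x : P, ∃ c : ℕ →₀ ℤ_[p],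
      x = c.sum fun l a => a • (FP ^ l) (β (MzeroOne p) (MzeroOne p))) ∧
    -- ... and are linearly independent over `F_p`
    (∀ c : ℕ →₀ ℤ_[p],
      (c.sum fun l a => a • (FP ^ l) (β (MzeroOne p) (MzeroOne p))) = 0 →
      ∀ l, (p : ℤ_[p]) ∣ c l) :=
  statement14_general p FP VP β hbox hFs hVs
end
end
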